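/- arXiv:1512.06225 — 2 statements merged into one kernel-verified Lean document; each statement's English description precedes it below -/
import Mathlib

section
/- For differentiable functions f₁,…,f_n on an interval and iterated integrals R_n(f₁,…,f_n; y, x) = ∫_x^y f₁(τ₁) ∫_x^{τ₁} f₂(τ₂) ⋯ ∫_x^{τ_{n-1}} f_n(τ_n) dτ_n ⋯ dτ₁, the generating series J(y,x) = 1 + Σ_{n≥1} Σ R_n(f_{m₁},…,f_{m_n}; y,x) A_{m₁}⋯A_{m_n} in noncommuting formal variables A₁,…,A_ℓ satisfies the multiplicative decomposition J(z,x) = J(z,y) J(y,x) for all x,y,z in the interval. -/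
open scoped BigOperators
open intervalIntegral

/-- Formal power series in `ℓ` noncommuting variables, as functions on monomials
(words in `Fin ℓ`); multiplication is the Cauchy product over splittings of a word. -/
noncomputable def ncMul {ℓ : ℕ} (x y : List (Fin ℓ) → ℂ) : List (Fin ℓ) → ℂ :=
  fun m => ∑ i ∈ Finset.range (m.length + 1), x (m.take i) * y (m.drop i)

/-- The iterated integral
`R_n(f_{m₁},…,f_{m_n}; y, x) = ∫_x^y f_{m₁}(τ₁) ∫_x^{τ₁} f_{m₂}(τ₂) ⋯ dτ_n ⋯ dτ₁`,
indexed by the word `m = (m₁,…,m_n)`; `R_0 = 1`. -/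
noncomputable def iterR {ℓ : ℕ} (f : Fin ℓ → ℝ → ℂ) :
    List (Fin ℓ) → ℝ → ℝ → ℂ
  | [], _, _ => 1
  | j :: m, y, x => ∫ τ in x..y, f j τ * iterR f m τ x

lemma iterR_cont {ℓ : ℕ} (f : Fin ℓ → ℝ → ℂ) (hf : ∀ j, Continuous (f j)) :
    ∀ (m : List (Fin ℓ)) (x : ℝ), Continuous (fun t => iterR f m t x)
  | [], _ => continuous_const
  | j :: m, x => by
    have hc : Continuous (fun τ => f j τ * iterR f m τ x) :=
      (hf j).mul (iterR_cont f hf m x)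
    exact intervalIntegral.continuous_primitive
      (fun a b => hc.intervalIntegrable a b) x

lemma chen {ℓ : ℕ} (f : Fin ℓ → ℝ → ℂ) (hf : ∀ j, Continuous (f j)) (x y : ℝ) :
    ∀ (m : List (Fin ℓ)) (z : ℝ),
      iterR f m z x = ∑ i ∈ Finset.range (m.length + 1),
        iterR f (m.take i) z y * iterR f (m.drop i) y x
  | [], z => by simp [iterR]
  | j :: m, z => by
    have hcont : ∀ (w : List (Fin ℓ)) (a : ℝ), Continuous (fun t => iterR f w t a) :=
      iterR_cont f hf
    have hc : Continuous (fun τ => f j τ * iterR f m τ x) :=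
      (hf j).mul (hcont m x)
    have hsplit : iterR f (j :: m) z x
        = iterR f (j :: m) y x + ∫ τ in y..z, f j τ * iterR f m τ x := by
      show (∫ τ in x..z, f j τ * iterR f m τ x) = _
      rw [← intervalIntegral.integral_add_adjacent_intervals
        (hc.intervalIntegrable x y) (hc.intervalIntegrable y z)]
      rfl
    have hIH : (∫ τ in y..z, f j τ * iterR f m τ x)
        = ∑ i ∈ Finset.range (m.length + 1),
            iterR f (j :: m.take i) z y * iterR f (m.drop i) y x := by
      have : (∫ τ in y..z, f j τ * iterR f m τ x)
          = ∫ τ in y..z, ∑ i ∈ Finset.range (m.length + 1),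
              f j τ * iterR f (m.take i) τ y * iterR f (m.drop i) y x := by
        congr 1
        ext τ
        rw [chen f hf x y m τ, Finset.mul_sum]
        exact Finset.sum_congr rfl (fun i _ => by ring)
      rw [this, intervalIntegral.integral_finset_sum]
      · refine Finset.sum_congr rfl (fun i _ => ?_)
        rw [intervalIntegral.integral_mul_const]
        rfl
      · intro i _
        exact (((hf j).mul (hcont (m.take i) y)).mul continuous_const).intervalIntegrable y z
    have hR : ∑ i ∈ Finset.range ((j :: m).length + 1),
          iterR f ((j :: m).take i) z y * iterR f ((j :: m).drop i) y x
        = (∑ i ∈ Finset.range (m.length + 1),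
            iterR f (j :: m.take i) z y * iterR f (m.drop i) y x)
          + iterR f (j :: m) y x := by
      rw [show (j :: m).length + 1 = m.length + 1 + 1 by simp, Finset.sum_range_succ']
      simp only [List.take_succ_cons, List.drop_succ_cons, List.take_zero, List.drop_zero]
      rw [show iterR f ([] : List (Fin ℓ)) z y = 1 from rfl, one_mul]
    rw [hsplit, hIH, hR, add_comm]

/-- the generating series
`J(y,x) = 1 + Σ R_n(f_{m₁},…,f_{m_n}; y,x) A_{m₁}⋯A_{m_n}` of iterated integrals of
continuous functions satisfies the multiplicative decomposition
`J(z,x) = J(z,y) J(y,x)` — coefficientwise for each monomial. -/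
theorem generating_series_multiplicative {ℓ : ℕ}
    (f : Fin ℓ → ℝ → ℂ) (hf : ∀ j, Continuous (f j))
    (x y z : ℝ) :
    (fun m => iterR f m z x) =
      ncMul (fun m => iterR f m z y) (fun m => iterR f m y x) := by
  funext m
  exact chen f hf x y m z
end

section
/- Abstract version of the surjectivity induction step: let O be a graded ring of noncommutative formal series over Γ-modules, N = 1 + O_{≥1}, and suppose that for every Γ-module V occurring as a coefficient module in degree c, every commutative cocycle φ ∈ Z^1(Γ; V) can be written φ_γ = −ψ_γ + a|(γ−1) for a ∈ V and ψ in a distinguished set S_V of cocycles (Knopp–Mawi property). Then for any X ∈ Z^1(Γ;N) and any P ∈ Z^1(Γ;N) with X_γ ≡ P_γ modulo terms of degree ≥ c (c ≥ 1), there exists H ∈ N with H ≡ 1 modulo degree ≥ c, and a cocycle P' ∈ Z^1(Γ;N) with P'_γ ≡ P_γ modulo degree ≥ c, such that (H|γ) X_γ H^{-1} ≡ P'_γ modulo terms of degree > c. -/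
open scoped BigOperators

/-- The unit series `1`. -/
noncomputable def ncOne {ℓ : ℕ} : List (Fin ℓ) → ℂ :=
  fun m => if m = [] then 1 else 0

/-- The series supported on the single monomial `m` with coefficient `v`. -/
noncomputable def sngl {ℓ : ℕ} (m : List (Fin ℓ)) (v : ℂ) : List (Fin ℓ) → ℂ :=
  fun m' => if m' = m then v else 0

namespace NCH
variable {ℓ : ℕ}

lemma ncMul_nil (x y : List (Fin ℓ) → ℂ) : ncMul x y [] = x [] * y [] := by
  simp [ncMul]

lemma ncMul_cons (x y : List (Fin ℓ) → ℂ) (a : Fin ℓ) (m : List (Fin ℓ)) :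
    ncMul x y (a :: m) = x [] * y (a :: m) + ncMul (fun u => x (a :: u)) y m := by
  simp only [ncMul, List.length_cons]
  rw [Finset.sum_range_succ']
  simp [add_comm]

lemma ncMul_assoc (x y z : List (Fin ℓ) → ℂ) :
    ncMul (ncMul x y) z = ncMul x (ncMul y z) := by
  funext m
  induction m generalizing x y z with
  | nil => simp [ncMul_nil, mul_assoc]
  | cons a m ih =>
    rw [ncMul_cons, ncMul_cons, ncMul_nil, ncMul_cons]
    have h1 : (fun u => ncMul x y (a :: u))
        = fun u => x [] * y (a :: u) + ncMul (fun v => x (a :: v)) y u := by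
      funext u; rw [ncMul_cons]
    rw [h1]
    have h2 : ncMul (fun u => x [] * y (a :: u) + ncMul (fun v => x (a :: v)) y u) z m
        = x [] * ncMul (fun u => y (a :: u)) z m
          + ncMul (ncMul (fun v => x (a :: v)) y) z m := by
      simp [ncMul, add_mul, Finset.sum_add_distrib, Finset.mul_sum, mul_assoc]
    rw [h2, ih]
    ring

lemma ncOne_mul (y : List (Fin ℓ) → ℂ) : ncMul ncOne y = y := by
  funext m
  cases m with
  | nil => simp [ncMul_nil, ncOne]
  | cons a m =>
    rw [ncMul_cons]
    simp [ncOne, ncMul]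

lemma mul_ncOne (x : List (Fin ℓ) → ℂ) : ncMul x ncOne = x := by
  funext m
  rw [ncMul]
  rw [Finset.sum_eq_single m.length]
  · simp [ncOne]
  · intro i hi hne
    have : m.drop i ≠ [] := by
      have : i < m.length := by
        simp [Finset.mem_range] at hi; omega
      simp [← List.length_pos_iff, this]
    simp [ncOne, this]
  · intro h; simp at h


noncomputable def ncInv (x : List (Fin ℓ) → ℂ) : List (Fin ℓ) → ℂ
  | [] => 1
  | a :: m => -∑ i ∈ Finset.range (m.length + 1), x (a :: m.take i) * ncInv x (m.drop i)
termination_by m => m.length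
decreasing_by simp

lemma ncInv_nil (x : List (Fin ℓ) → ℂ) : ncInv x [] = 1 := by rw [ncInv]

lemma ncInv_cons (x : List (Fin ℓ) → ℂ) (a : Fin ℓ) (m : List (Fin ℓ)) :
    ncInv x (a :: m) = -ncMul (fun u => x (a :: u)) (ncInv x) m := by
  rw [ncInv, ncMul]

lemma ncMul_ncInv (x : List (Fin ℓ) → ℂ) (h1 : x [] = 1) :
    ncMul x (ncInv x) = ncOne := by
  funext m
  cases m with
  | nil => simp [ncMul_nil, ncInv_nil, h1, ncOne]
  | cons a m =>
    rw [ncMul_cons, ncInv_cons, h1]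
    simp [ncOne]

lemma ncInv_ncMul (x : List (Fin ℓ) → ℂ) (h1 : x [] = 1) :
    ncMul (ncInv x) x = ncOne := by
  have hr : ncInv x [] = 1 := ncInv_nil x
  have h2 : ncMul (ncInv x) (ncInv (ncInv x)) = ncOne := ncMul_ncInv _ hr
  have hx : x = ncInv (ncInv x) := by
    calc x = ncMul x ncOne := (mul_ncOne x).symm
    _ = ncMul x (ncMul (ncInv x) (ncInv (ncInv x))) := by rw [h2]
    _ = ncMul (ncMul x (ncInv x)) (ncInv (ncInv x)) := (ncMul_assoc _ _ _).symm
    _ = ncInv (ncInv x) := by rw [ncMul_ncInv x h1, ncOne_mul]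
  nth_rewrite 2 [hx]
  exact h2

section low
variable {c : ℕ} {f : List (Fin ℓ) → ℂ}

/-- f ≡ 1 below degree c. -/
def lowOne (c : ℕ) (f : List (Fin ℓ) → ℂ) : Prop :=
  f [] = 1 ∧ ∀ m : List (Fin ℓ), m ≠ [] → m.length < c → f m = 0

lemma mul_low_left (hf : lowOne c f) (g : List (Fin ℓ) → ℂ) (m : List (Fin ℓ))
    (hm : m.length < c) : ncMul f g m = g m := by
  rw [ncMul, Finset.sum_eq_single 0]
  · simp [hf.1]
  · intro i hi hne
    simp only [Finset.mem_range] at hi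
    have hlen : (m.take i).length = i := by simp; omega
    have : f (m.take i) = 0 := by
      apply hf.2
      · intro h; rw [h] at hlen; simp at hlen; omega
      · omega
    simp [this]
  · simp

lemma mul_low_right (hf : lowOne c f) (g : List (Fin ℓ) → ℂ) (m : List (Fin ℓ))
    (hm : m.length < c) : ncMul g f m = g m := by
  rw [ncMul, Finset.sum_eq_single m.length]
  · simp [hf.1]
  · intro i hi hne
    simp only [Finset.mem_range] at hi
    have hil : i < m.length := by omega
    have hlen : (m.drop i).length = m.length - i := by simp
    have : f (m.drop i) = 0 := by
      apply hf.2
      · intro h; rw [h] at hlen; simp at hlen; omega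
      · omega
    simp [this]
  · simp

lemma mul_deg_left (hf : lowOne c f) (g : List (Fin ℓ) → ℂ) (m : List (Fin ℓ))
    (hm : m.length = c) (hc : 1 ≤ c) : ncMul f g m = g m + f m * g [] := by
  rw [ncMul, Finset.sum_eq_add_of_mem 0 m.length (by simp) (by simp) (by omega)]
  · rw [List.take_length, List.drop_length, List.take_zero, List.drop_zero, hf.1, one_mul]
  · intro i hi hne
    simp only [Finset.mem_range] at hi
    have hlen : (m.take i).length = i := by
      rw [List.length_take]; omega
    have : f (m.take i) = 0 := by
      apply hf.2
      · intro h; rw [h] at hlen; simp at hlen; omega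
      · omega
    simp [this]

lemma mul_deg_right (hf : lowOne c f) (g : List (Fin ℓ) → ℂ) (m : List (Fin ℓ))
    (hm : m.length = c) (hc : 1 ≤ c) : ncMul g f m = g m + g [] * f m := by
  rw [ncMul, Finset.sum_eq_add_of_mem 0 m.length (by simp) (by simp) (by omega)]
  · rw [List.take_length, List.drop_length, List.take_zero, List.drop_zero, hf.1, mul_one]
    ring
  · intro i hi hne
    simp only [Finset.mem_range] at hi
    have hlen : (m.drop i).length = m.length - i := by simp
    have : f (m.drop i) = 0 := by
      apply hf.2
      · intro h; rw [h] at hlen; simp at hlen; omega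
      · omega
    simp [this]

lemma ncInv_low (hf : lowOne c f) (m : List (Fin ℓ)) (hnil : m ≠ [])
    (hm : m.length < c) : ncInv f m = 0 := by
  cases m with
  | nil => simp at hnil
  | cons a m =>
    rw [ncInv_cons, ncMul, neg_eq_zero]
    apply Finset.sum_eq_zero
    intro i hi
    simp only [Finset.mem_range] at hi
    have : f (a :: m.take i) = 0 := by
      apply hf.2 _ (by simp)
      simp only [List.length_cons] at hm ⊢
      rw [List.length_take]; omega
    simp [this]

lemma ncInv_lowOne (hf : lowOne c f) : lowOne c (ncInv f) :=
  ⟨ncInv_nil f, ncInv_low hf⟩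

lemma ncInv_deg (hf : lowOne c f) (m : List (Fin ℓ)) (hm : m.length = c)
    (hc : 1 ≤ c) : ncInv f m = -f m := by
  cases m with
  | nil => simp at hm; omega
  | cons a m =>
    rw [ncInv_cons, ncMul, neg_inj]
    rw [Finset.sum_eq_single m.length]
    · rw [List.take_length, List.drop_length, ncInv_nil, mul_one]
    · intro i hi hne
      simp only [Finset.mem_range] at hi
      have : f (a :: m.take i) = 0 := by
        apply hf.2 _ (by simp)
        simp only [List.length_cons] at hm ⊢
        rw [List.length_take]; omega
      simp [this]
    · simp

end low
end NCH

/-- abstract induction step for surjectivity.  `Γ` acts on the ring of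
noncommutative formal series by degree-preserving ring automorphisms acting on the
coefficient of each monomial.  For every monomial `B` of degree `c` there is a
distinguished set `S B` of commutative cocycles (Knopp cocycles of cusp forms) such that
every commutative cocycle `φ` for the coefficient module of `B` can be written
`φ_γ = −ψ_γ + a|(γ−1)` with `ψ ∈ S B` (Knopp–Mawi property).  Then for cocycles
`X, P ∈ Z¹(Γ;N)` with `X ≡ P` modulo terms of degree `≥ c` (`c ≥ 1`) there exist
`H ∈ N` with `H ≡ 1` modulo degree `≥ c` and a cocycle `P' ∈ Z¹(Γ;N)` with
`P' ≡ P` modulo degree `≥ c`, whose degree-`c` coefficients come from distinguished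
cocycles (`P'_γ[B] = P_γ[B] − ψ^B_γ` with `ψ^B ∈ S B`), such that
`(H|γ) X_γ H⁻¹ ≡ P'_γ` modulo terms of degree `> c` (stated multiplicatively as
`(H|γ)·X_γ ≡ P'_γ·H` in degrees `≤ c`). -/
theorem surjectivity_induction_step {ℓ : ℕ} {Γ : Type*} [Group Γ]
    (act : Γ → (List (Fin ℓ) → ℂ) → (List (Fin ℓ) → ℂ))
    (hact_add : ∀ γ x y, act γ (x + y) = act γ x + act γ y)
    (hact_mul : ∀ γ x y, act γ (ncMul x y) = ncMul (act γ x) (act γ y))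
    (hact_one : ∀ γ, act γ ncOne = ncOne)
    (hact_anti : ∀ γ δ x, act δ (act γ x) = act (γ * δ) x)
    (hact_mono : ∀ γ (x y : List (Fin ℓ) → ℂ) m, x m = y m → act γ x m = act γ y m)
    (c : ℕ) (hc : 1 ≤ c)
    (S : List (Fin ℓ) → Set (Γ → ℂ))
    (hS_coc : ∀ m : List (Fin ℓ), m.length = c → ∀ ψ ∈ S m, ∀ γ δ : Γ,
      ψ (γ * δ) = act δ (sngl m (ψ γ)) m + ψ δ)
    (hKM : ∀ m : List (Fin ℓ), m.length = c → ∀ φ : Γ → ℂ,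
      (∀ γ δ : Γ, φ (γ * δ) = act δ (sngl m (φ γ)) m + φ δ) →
      ∃ ψ ∈ S m, ∃ a : ℂ, ∀ γ : Γ, φ γ = -ψ γ + (act γ (sngl m a) m - a))
    (X P : Γ → List (Fin ℓ) → ℂ)
    (hX1 : ∀ γ, X γ [] = 1) (hP1 : ∀ γ, P γ [] = 1)
    (hXcoc : ∀ γ δ, X (γ * δ) = ncMul (act δ (X γ)) (X δ))
    (hPcoc : ∀ γ δ, P (γ * δ) = ncMul (act δ (P γ)) (P δ))
    (hlow : ∀ γ (m : List (Fin ℓ)), m.length < c → X γ m = P γ m) :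
    ∃ H : List (Fin ℓ) → ℂ,
      H [] = 1 ∧ (∀ m : List (Fin ℓ), m ≠ [] → m.length < c → H m = 0) ∧
      ∃ P' : Γ → List (Fin ℓ) → ℂ,
        (∀ γ, P' γ [] = 1) ∧
        (∀ γ δ, P' (γ * δ) = ncMul (act δ (P' γ)) (P' δ)) ∧
        (∀ γ (m : List (Fin ℓ)), m.length < c → P' γ m = P γ m) ∧
        (∃ ψ : List (Fin ℓ) → Γ → ℂ,
          (∀ m : List (Fin ℓ), m.length = c → ψ m ∈ S m) ∧
          (∀ γ (m : List (Fin ℓ)), m.length = c → P' γ m = P γ m - ψ m γ)) ∧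
        (∀ γ (m : List (Fin ℓ)), m.length ≤ c →
          ncMul (act γ H) (X γ) m = ncMul (P' γ) H m) := by
  classical
  -- basic facts about the action
  have hact0 : ∀ γ : Γ, act γ (0 : List (Fin ℓ) → ℂ) = 0 := by
    intro γ
    have h := hact_add γ 0 0
    rw [add_zero] at h
    exact (add_eq_left.mp h.symm)
  have hact_neg : ∀ (γ : Γ) (x : List (Fin ℓ) → ℂ), act γ (-x) = -act γ x := by
    intro γ x
    have h := hact_add γ x (-x)
    rw [add_neg_cancel, hact0] at h
    exact eq_neg_of_add_eq_zero_right h.symm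
  have hact_sub : ∀ (γ : Γ) (x y : List (Fin ℓ) → ℂ),
      act γ (x - y) = act γ x - act γ y := by
    intro γ x y
    rw [sub_eq_add_neg, hact_add, hact_neg, sub_eq_add_neg]
  have hconst : ∀ (γ : Γ) (g : List (Fin ℓ) → ℂ), g [] = 1 → act γ g [] = 1 := by
    intro γ g hg
    have h := hact_mono γ g ncOne [] (by simp [ncOne, hg])
    rw [h, hact_one]
    simp [ncOne]
  have hzero : ∀ (γ : Γ) (g : List (Fin ℓ) → ℂ) (m : List (Fin ℓ)),
      g m = 0 → act γ g m = 0 := by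
    intro γ g m hg
    have h := hact_mono γ g 0 m (by simpa using hg)
    rw [h, hact0]
    rfl
  have sngl_neg : ∀ (m : List (Fin ℓ)) (v : ℂ), sngl m (-v) = -sngl m v := by
    intro m v; funext u; by_cases h : u = m <;> simp [sngl, h]
  have sngl_sub : ∀ (m : List (Fin ℓ)) (u v : ℂ),
      sngl m (u - v) = sngl m u - sngl m v := by
    intro m u v; funext w; by_cases h : w = m <;> simp [sngl, h]
  -- the degree-c cocycle property of X - P
  have hφcoc : ∀ m : List (Fin ℓ), m.length = c → ∀ γ δ : Γ,
      X (γ * δ) m - P (γ * δ) m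
        = act δ (sngl m (X γ m - P γ m)) m + (X δ m - P δ m) := by
    intro m hm γ δ
    have hXm : X (γ * δ) m = ∑ i ∈ Finset.range (m.length + 1),
        act δ (X γ) (m.take i) * X δ (m.drop i) := by rw [hXcoc]; rfl
    have hPm : P (γ * δ) m = ∑ i ∈ Finset.range (m.length + 1),
        act δ (P γ) (m.take i) * P δ (m.drop i) := by rw [hPcoc]; rfl
    rw [hXm, hPm, ← Finset.sum_sub_distrib]
    rw [Finset.sum_eq_add_of_mem 0 m.length (by simp) (by simp) (by omega)
      (by
        intro i hi hne
        simp only [Finset.mem_range] at hi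
        have h1 : act δ (X γ) (m.take i) = act δ (P γ) (m.take i) :=
          hact_mono δ _ _ _ (hlow γ _ (by rw [List.length_take]; omega))
        have h2 : X δ (m.drop i) = P δ (m.drop i) :=
          hlow δ _ (by rw [List.length_drop]; omega)
        rw [h1, h2]; ring)]
    rw [List.take_zero, List.drop_zero, List.take_length, List.drop_length]
    have c1 : act δ (X γ) [] = 1 := hconst δ (X γ) (hX1 γ)
    have c2 : act δ (P γ) [] = 1 := hconst δ (P γ) (hP1 γ)
    have e1 : act δ (X γ) m - act δ (P γ) m
        = act δ (sngl m (X γ m - P γ m)) m := by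
      have t1 : act δ (X γ) m = act δ (sngl m (X γ m)) m :=
        hact_mono δ _ _ _ (by simp [sngl])
      have t2 : act δ (P γ) m = act δ (sngl m (P γ m)) m :=
        hact_mono δ _ _ _ (by simp [sngl])
      rw [t1, t2, sngl_sub, hact_sub]
      rfl
    rw [c1, c2, hX1, hP1]
    linear_combination e1
  -- choose ψ and a by the Knopp--Mawi property
  have key : ∀ m : List (Fin ℓ), m.length = c →
      ∃ ψ, ψ ∈ S m ∧ ∃ a : ℂ, ∀ γ : Γ,
        X γ m - P γ m = -ψ γ + (act γ (sngl m a) m - a) := by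
    intro m hm
    obtain ⟨ψ, hψ, a, ha⟩ := hKM m hm (fun γ => X γ m - P γ m) (hφcoc m hm)
    exact ⟨ψ, hψ, a, ha⟩
  set ψ0 : List (Fin ℓ) → Γ → ℂ := fun m =>
    if h : m.length = c then (key m h).choose else fun _ => 0 with hψ0
  set a0 : List (Fin ℓ) → ℂ := fun m =>
    if h : m.length = c then (key m h).choose_spec.2.choose else 0 with ha0
  have hψS : ∀ m : List (Fin ℓ), m.length = c → ψ0 m ∈ S m := by
    intro m h
    simp only [hψ0, dif_pos h]
    exact (key m h).choose_spec.1
  have hψa : ∀ (m : List (Fin ℓ)) (h : m.length = c) (γ : Γ),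
      X γ m - P γ m = -ψ0 m γ + (act γ (sngl m (a0 m)) m - a0 m) := by
    intro m h γ
    simp only [hψ0, ha0, dif_pos h]
    exact (key m h).choose_spec.2.choose_spec γ
  -- the coboundary series H
  set H : List (Fin ℓ) → ℂ := fun m =>
    if m = [] then 1 else if m.length = c then -(a0 m) else 0 with hH
  have hH1 : H [] = 1 := by simp [hH]
  have hHlow : ∀ m : List (Fin ℓ), m ≠ [] → m.length < c → H m = 0 := by
    intro m h1 h2
    simp only [hH]
    rw [if_neg h1, if_neg (by omega)]
  have hHdeg : ∀ m : List (Fin ℓ), m.length = c → H m = -(a0 m) := by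
    intro m h
    have hne : m ≠ [] := by
      intro e; rw [e] at h; simp at h; omega
    simp only [hH]
    rw [if_neg hne, if_pos h]
  have hHone : NCH.lowOne c H := ⟨hH1, hHlow⟩
  set Hi := NCH.ncInv H with hHi
  have hHione : NCH.lowOne c Hi := NCH.ncInv_lowOne hHone
  have hHiH : ncMul Hi H = ncOne := NCH.ncInv_ncMul H hH1
  have hHγone : ∀ γ : Γ, NCH.lowOne c (act γ H) := fun γ =>
    ⟨hconst γ H hH1, fun m h1 h2 => hzero γ H m (hHlow m h1 h2)⟩
  -- the modified cocycle P'
  set P' : Γ → List (Fin ℓ) → ℂ :=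
    fun γ => ncMul (ncMul (act γ H) (X γ)) Hi with hP'
  have hP'1 : ∀ γ, P' γ [] = 1 := by
    intro γ
    simp only [hP']
    rw [NCH.ncMul_nil, NCH.ncMul_nil, (hHγone γ).1, hX1, hHione.1]
    ring
  have e1 : ∀ (δ : Γ) (t : List (Fin ℓ) → ℂ),
      ncMul (act δ Hi) (ncMul (act δ H) t) = t := by
    intro δ t
    rw [← NCH.ncMul_assoc, ← hact_mul, hHiH, hact_one, NCH.ncOne_mul]
  have hP'coc : ∀ γ δ, P' (γ * δ) = ncMul (act δ (P' γ)) (P' δ) := by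
    intro γ δ
    simp only [hP']
    rw [hXcoc]
    simp only [hact_mul, NCH.ncMul_assoc, hact_anti]
    rw [e1]
  have hP'low : ∀ γ (m : List (Fin ℓ)), m.length < c → P' γ m = P γ m := by
    intro γ m hm
    simp only [hP']
    rw [NCH.mul_low_right hHione _ m hm, NCH.mul_low_left (hHγone γ) _ m hm]
    exact hlow γ m hm
  have hP'deg : ∀ γ (m : List (Fin ℓ)), m.length = c → P' γ m = P γ m - ψ0 m γ := by
    intro γ m hm
    simp only [hP']
    rw [NCH.mul_deg_right hHione _ m hm hc, NCH.mul_deg_left (hHγone γ) _ m hm hc,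
      NCH.ncMul_nil, (hHγone γ).1, hX1]
    have hHim : Hi m = a0 m := by
      rw [hHi, NCH.ncInv_deg hHone m hm hc, hHdeg m hm, neg_neg]
    have hHγm : act γ H m = -(act γ (sngl m (a0 m)) m) := by
      have h1 : act γ H m = act γ (sngl m (-(a0 m))) m :=
        hact_mono γ H _ m (by rw [hHdeg m hm]; simp [sngl])
      rw [h1, sngl_neg, hact_neg]
      rfl
    rw [hHim, hHγm]
    have hs := hψa m hm γ
    linear_combination hs
  have hPH : ∀ γ, ncMul (P' γ) H = ncMul (act γ H) (X γ) := by
    intro γ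
    simp only [hP']
    rw [NCH.ncMul_assoc, hHiH, NCH.mul_ncOne]
  exact ⟨H, hH1, hHlow, P', hP'1, hP'coc, hP'low,
    ⟨ψ0, hψS, hP'deg⟩, fun γ m _ => congrFun (hPH γ).symm m⟩
end
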